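/- If S is a μ-preserving m-transformation, then the Koopman operator U, Uf(x) = (1/|S(x)|) Σ_{y∈S(x)} f(y), is a positive linear contraction on L^p(μ) for every 1 ≤ p ≤ ∞, i.e., ‖Uf‖_p ≤ ‖f‖_p. -/

import Mathlib

open MeasureTheory Set Filter Finset
open scoped ENNReal Classical

noncomputable section

/-- The stochastic kernel of a finite-multivalued transformation `S`:
`K(x,B) = |S(x) ∩ B| / |S(x)|`, valued in `ℝ≥0∞`. -/
def fker {X : Type*} (S : X → Finset X) (x : X) (B : Set X) : ℝ≥0∞ :=
  (((S x).filter (fun y => y ∈ B)).card : ℝ≥0∞) / ((S x).card : ℝ≥0∞)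

/-- The set `S⁻¹_{k;l}(B) = {x : |S(x)| = k, |S(x) ∩ B| = l}`. -/
def preimKL {X : Type*} (S : X → Finset X) (k l : ℕ) (B : Set X) : Set X :=
  {x | (S x).card = k ∧ ((S x).filter (fun y => y ∈ B)).card = l}

/-- The full preimage `S⁻¹(B) = {x : S(x) ∩ B ≠ ∅}`. -/
def fullPre {X : Type*} (S : X → Finset X) (B : Set X) : Set X :=
  {x | ∃ y ∈ S x, y ∈ B}

/-- The Koopman operator `Uf(x) = (1/|S(x)|) ∑_{y ∈ S(x)} f(y)`. -/
def koop {X : Type*} (S : X → Finset X) (f : X → ℝ) (x : X) : ℝ :=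
  (∑ y ∈ S x, f y) / ((S x).card : ℝ)

/-!
`U` averages over `S(x)`, so pointwise `|Uf| ≤ U|f|` and, by Jensen, `|Uf|^p ≤ U(|f|^p)`.
The invariance `∫ K(·,B) dμ = μ(B)` extends from indicators to all nonnegative measurable `g`
by monotone approximation, giving `∫ Ug dμ = ∫ g dμ` and hence `‖Uf‖_p ≤ ‖f‖_p` for `p < ∞`.
Applied to a null set `N`, invariance shows that `S(x)` misses `N` for a.e. `x`; this gives the
case `p = ∞` and lets `U` respect a.e. equality.
-/

theorem ENNReal.rpow_sum_div_card_le {ι : Type*} (s : Finset ι) (g : ι → ℝ≥0∞) {p : ℝ}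
    (hp : 1 ≤ p) : ((∑ i ∈ s, g i) / #s) ^ p ≤ (∑ i ∈ s, g i ^ p) / #s := by
  rcases s.eq_empty_or_nonempty with rfl | hs
  · simp [ENNReal.zero_rpow_of_pos (zero_lt_one.trans_le hp)]
  have hw : ∑ _i ∈ s, (#s : ℝ≥0∞)⁻¹ = 1 := by
    rw [sum_const, nsmul_eq_mul, ENNReal.mul_inv_cancel (by simpa using hs.ne_empty)
      (ENNReal.natCast_ne_top _)]
  rw [ENNReal.div_eq_inv_mul, ENNReal.div_eq_inv_mul, mul_sum, mul_sum]
  exact ENNReal.rpow_arith_mean_le_arith_mean_rpow s _ g hw hp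

section Koopman

variable {X : Type*} (S : X → Finset X)

def IsMeasurableMultimap [MeasurableSpace X] : Prop :=
  ∀ B : Set X, MeasurableSet B → ∀ k l : ℕ, MeasurableSet (preimKL S k l B)

/-- `Sμ = μ`: the kernel `fker S` transports `μ` to itself. -/
def PreservesMeasure [MeasurableSpace X] (μ : Measure X) : Prop :=
  ∀ B : Set X, MeasurableSet B → ∫⁻ x, fker S x B ∂μ = μ B

def koopENNReal (g : X → ℝ≥0∞) (x : X) : ℝ≥0∞ :=
  (∑ y ∈ S x, g y) / (S x).card

theorem koop_add (f g : X → ℝ) : koop S (f + g) = koop S f + koop S g := by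
  ext x
  simp only [koop, Pi.add_apply, sum_add_distrib, add_div]

theorem koop_smul (c : ℝ) (f : X → ℝ) : koop S (c • f) = c • koop S f := by
  ext x
  simp only [koop, Pi.smul_apply, smul_eq_mul, ← mul_sum, mul_div_assoc]

theorem koop_nonneg {f : X → ℝ} (hf : ∀ x, 0 ≤ f x) (x : X) : 0 ≤ koop S f x :=
  div_nonneg (sum_nonneg fun y _ => hf y) (Nat.cast_nonneg _)

theorem enorm_koop_le (f : X → ℝ) (x : X) : ‖koop S f x‖ₑ ≤ koopENNReal S (‖f ·‖ₑ) x := by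
  rcases (S x).eq_empty_or_nonempty with hx | hx
  · simp [koop, hx]
  rw [koop, koopENNReal, ← ofReal_norm, norm_div, Real.norm_natCast,
    ENNReal.ofReal_div_of_pos (by simpa using hx.card_pos), ENNReal.ofReal_natCast, ofReal_norm]
  gcongr
  exact enorm_sum_le _ _

theorem koopENNReal_le_of_forall_mem_le {g : X → ℝ≥0∞} {c : ℝ≥0∞} {x : X}
    (h : ∀ y ∈ S x, g y ≤ c) : koopENNReal S g x ≤ c :=
  ENNReal.div_le_of_le_mul <| (sum_le_sum h).trans_eq <| by rw [sum_const, nsmul_eq_mul, mul_comm]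

theorem koopENNReal_add (f g : X → ℝ≥0∞) :
    koopENNReal S (f + g) = koopENNReal S f + koopENNReal S g := by
  ext x
  simp only [koopENNReal, Pi.add_apply, sum_add_distrib, ENNReal.add_div]

theorem koopENNReal_mono : Monotone (koopENNReal S) := fun _ _ h _ =>
  ENNReal.div_le_div_right (sum_le_sum fun y _ => h y) _

theorem koopENNReal_iSup {f : ℕ → X → ℝ≥0∞} (hf : Monotone f) :
    koopENNReal S (fun x => ⨆ n, f n x) = fun x => ⨆ n, koopENNReal S (f n) x := by
  ext x
  rw [koopENNReal, ENNReal.finsetSum_iSup_of_monotone fun y _ _ h => hf h y, ENNReal.iSup_div]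
  rfl

theorem koopENNReal_indicator (B : Set X) (c : ℝ≥0∞) :
    koopENNReal S (B.indicator fun _ => c) = fun x => c * fker S x B := by
  ext x
  rw [koopENNReal, sum_indicator_eq_sum_filter, sum_const, nsmul_eq_mul, mul_comm, fker,
    mul_div_assoc]

variable {S} [MeasurableSpace X]

theorem measurable_card_filter_mem (hS : IsMeasurableMultimap S) {B : Set X}
    (hB : MeasurableSet B) : Measurable fun x => ((S x).filter (· ∈ B)).card := by
  refine measurable_to_countable' fun l => ?_
  have : (fun x => ((S x).filter (· ∈ B)).card) ⁻¹' {l} = ⋃ k : ℕ, preimKL S k l B := by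
    ext x
    simp [preimKL]
  rw [this]
  exact .iUnion fun k => hS B hB k l

theorem measurable_fker (hS : IsMeasurableMultimap S) {B : Set X} (hB : MeasurableSet B) :
    Measurable fun x => fker S x B := by
  have hcard := measurable_card_filter_mem hS MeasurableSet.univ
  simp only [Set.mem_univ, filter_true_of_mem, implies_true] at hcard
  exact (measurable_from_top.comp (measurable_card_filter_mem hS hB)).div
    (measurable_from_top.comp hcard)

variable {μ : Measure X}

theorem ae_forall_mem_of_ae (hS : IsMeasurableMultimap S) (hμ : PreservesMeasure S μ)
    {P : X → Prop} (hP : ∀ᵐ y ∂μ, P y) : ∀ᵐ x ∂μ, ∀ y ∈ S x, P y := by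
  obtain ⟨N, hPN, hN, hμN⟩ := exists_measurable_superset_of_null (ae_iff.1 hP)
  have hfker : (fun x => fker S x N) =ᵐ[μ] 0 :=
    (lintegral_eq_zero_iff (measurable_fker hS hN)).1 (by rw [hμ N hN, hμN])
  filter_upwards [hfker] with x hx y hy
  by_contra hPy
  have : ((S x).filter (· ∈ N)).card = 0 := by
    simpa [fker, ENNReal.div_eq_zero_iff] using hx
  exact (filter_eq_empty_iff.1 (card_eq_zero.1 this)) hy (hPN hPy)

theorem koop_ae_congr (hS : IsMeasurableMultimap S) (hμ : PreservesMeasure S μ) {f g : X → ℝ}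
    (h : f =ᵐ[μ] g) : koop S f =ᵐ[μ] koop S g := by
  filter_upwards [ae_forall_mem_of_ae hS hμ h] with x hx
  rw [koop, koop, sum_congr rfl hx]

theorem measurable_koopENNReal_and_lintegral_eq (hS : IsMeasurableMultimap S)
    (hμ : PreservesMeasure S μ) {g : X → ℝ≥0∞} (hg : Measurable g) :
    Measurable (koopENNReal S g) ∧ ∫⁻ x, koopENNReal S g x ∂μ = ∫⁻ x, g x ∂μ := by
  refine Measurable.ennreal_induction
    (motive := fun g => Measurable (koopENNReal S g) ∧ ∫⁻ x, koopENNReal S g x ∂μ = ∫⁻ x, g x ∂μ)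
    (fun c B hB => ?_) (fun f g _ hf _ ihf ihg => ?_) (fun f hf hmono ih => ?_) hg
  · rw [koopENNReal_indicator]
    refine ⟨measurable_const.mul (measurable_fker hS hB), ?_⟩
    rw [lintegral_const_mul c (measurable_fker hS hB), hμ B hB, lintegral_indicator_const hB]
  · rw [koopENNReal_add]
    refine ⟨ihf.1.add ihg.1, ?_⟩
    simp only [Pi.add_apply]
    rw [lintegral_add_left ihf.1, ihf.2, ihg.2, lintegral_add_left hf]
  · rw [koopENNReal_iSup S hmono]
    refine ⟨.iSup fun n => (ih n).1, ?_⟩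
    rw [lintegral_iSup (fun n => (ih n).1) ((koopENNReal_mono S).comp hmono),
      lintegral_iSup hf hmono]
    exact iSup_congr fun n => (ih n).2

theorem eLpNormEssSup_koop_le (hS : IsMeasurableMultimap S) (hμ : PreservesMeasure S μ)
    (f : X → ℝ) : eLpNormEssSup (koop S f) μ ≤ eLpNormEssSup f μ := by
  refine essSup_le_of_ae_le _ ?_
  filter_upwards [ae_forall_mem_of_ae hS hμ (ae_le_eLpNormEssSup (f := f))] with x hx
  exact (enorm_koop_le S f x).trans (koopENNReal_le_of_forall_mem_le S hx)

theorem eLpNorm'_koop_le (hS : IsMeasurableMultimap S) (hμ : PreservesMeasure S μ) {q : ℝ}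
    (hq : 1 ≤ q) {f : X → ℝ} (hf : Measurable f) :
    eLpNorm' (koop S f) q μ ≤ eLpNorm' f q μ := by
  have hq₀ : 0 < q := zero_lt_one.trans_le hq
  refine ENNReal.rpow_le_rpow ?_ (by positivity)
  calc ∫⁻ x, ‖koop S f x‖ₑ ^ q ∂μ
      ≤ ∫⁻ x, koopENNReal S (‖f ·‖ₑ ^ q) x ∂μ := lintegral_mono fun x =>
        (ENNReal.rpow_le_rpow (enorm_koop_le S f x) hq₀.le).trans
          (ENNReal.rpow_sum_div_card_le _ _ hq)
    _ = ∫⁻ x, ‖f x‖ₑ ^ q ∂μ :=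
        (measurable_koopENNReal_and_lintegral_eq hS hμ (hf.enorm.pow_const q)).2

theorem eLpNorm_koop_le (hS : IsMeasurableMultimap S) (hμ : PreservesMeasure S μ)
    {p : ℝ≥0∞} (hp : 1 ≤ p) {f : X → ℝ} (hf : AEStronglyMeasurable f μ) :
    eLpNorm (koop S f) p μ ≤ eLpNorm f p μ := by
  rcases eq_or_ne p ∞ with rfl | hp_top
  · simpa only [eLpNorm_exponent_top] using eLpNormEssSup_koop_le hS hμ f
  have hp₀ : p ≠ 0 := (zero_lt_one.trans_le hp).ne'
  rw [eLpNorm_congr_ae hf.ae_eq_mk, eLpNorm_congr_ae (koop_ae_congr hS hμ hf.ae_eq_mk),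
    eLpNorm_eq_eLpNorm' hp₀ hp_top, eLpNorm_eq_eLpNorm' hp₀ hp_top]
  exact eLpNorm'_koop_le hS hμ (ENNReal.toReal_mono hp_top hp) hf.stronglyMeasurable_mk.measurable

end Koopman

theorem koopman_contraction_general {X : Type*} [MeasurableSpace X] (μ : Measure X)
    (S : X → Finset X)
    (hmeas : ∀ B : Set X, MeasurableSet B → ∀ k l : ℕ, MeasurableSet (preimKL S k l B))
    (hpres : ∀ B : Set X, MeasurableSet B → ∫⁻ x, fker S x B ∂μ = μ B) :
    (∀ f g : X → ℝ, koop S (f + g) = koop S f + koop S g) ∧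
    (∀ (c : ℝ) (f : X → ℝ), koop S (c • f) = c • koop S f) ∧
    (∀ f : X → ℝ, (∀ x, 0 ≤ f x) → ∀ x, 0 ≤ koop S f x) ∧
    (∀ p : ℝ≥0∞, 1 ≤ p → ∀ f : X → ℝ, MemLp f p μ →
      eLpNorm (koop S f) p μ ≤ eLpNorm f p μ) :=
  ⟨koop_add S, koop_smul S, fun _ => koop_nonneg S,
    fun _ hp _ hf => eLpNorm_koop_le hmeas hpres hp hf.1⟩

/-- for a μ-preserving m-transformation, the Koopman operator `U` is a
positive linear contraction on `L^p(μ)` for every `1 ≤ p ≤ ∞`. -/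
theorem koopman_contraction {X : Type*} [MeasurableSpace X] (μ : Measure X)
    [IsProbabilityMeasure μ] (m : ℕ) (hm : 0 < m) (S : X → Finset X)
    (hcard : ∀ x, 1 ≤ (S x).card ∧ (S x).card ≤ m)
    (hmeas : ∀ B : Set X, MeasurableSet B → ∀ k l : ℕ, MeasurableSet (preimKL S k l B))
    (hpres : ∀ B : Set X, MeasurableSet B → ∫⁻ x, fker S x B ∂μ = μ B) :
    (∀ f g : X → ℝ, koop S (f + g) = koop S f + koop S g) ∧
    (∀ (c : ℝ) (f : X → ℝ), koop S (c • f) = c • koop S f) ∧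
    (∀ f : X → ℝ, (∀ x, 0 ≤ f x) → ∀ x, 0 ≤ koop S f x) ∧
    (∀ p : ℝ≥0∞, 1 ≤ p → ∀ f : X → ℝ, MemLp f p μ →
      eLpNorm (koop S f) p μ ≤ eLpNorm f p μ) :=
  koopman_contraction_general μ S hmeas hpres
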